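/- Let U : ℝ^d → ℝ have gradient ξ = ∇U twice continuously differentiable, let α ∈ ℝ, r > 0, and suppose the level set ℳ_α = {x : U(x) = α} meets 𝒩^c = {x : ξ(x) ≠ 0}. Choose ε > 0 with ℳ_α^ε ⊆ 𝒩^c. Then there exists a constant C(ε,α,r) > 0 such that for every z = (x,v) with |z| ≤ r and x ∈ ℳ_α^{ε/2}, and every 0 < h < min{ε/r, (ε/(2C(r)))^{1/2}}, one has |𝐩(φ_h(z)) − 𝐩(z) − h·(ã(z) + (0, b̃(z)))| ≤ h²·C(ε,α,r), where C(r) = r·sup_{|y|≤r}|ξ(y)| + r²·sup_{|y|≤r}|∂ξ(y)|. -/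

import Mathlib

open MeasureTheory
open scoped ENNReal RealInnerProductSpace

/-- The circle transform with angle `h` on `ℝ^d × ℝ^d`. -/
noncomputable def circleT (d : ℕ) (h : ℝ)
    (z : EuclideanSpace ℝ (Fin d) × EuclideanSpace ℝ (Fin d)) :
    EuclideanSpace ℝ (Fin d) × EuclideanSpace ℝ (Fin d) :=
  (Real.cos h • z.1 + Real.sin h • z.2, -(Real.sin h) • z.1 + Real.cos h • z.2)

/-- The normalized vector field `ξ̄(x) = ξ(x)/|ξ(x)|` (junk value `0` on `𝒩 = {ξ = 0}`). -/
noncomputable def xibar (d : ℕ) (ξ : EuclideanSpace ℝ (Fin d) → EuclideanSpace ℝ (Fin d))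
    (x : EuclideanSpace ℝ (Fin d)) : EuclideanSpace ℝ (Fin d) :=
  ‖ξ x‖⁻¹ • ξ x

open Classical in
/-- The reflection `R(x)v = v − 2(ξ̄(x)ᵀv)ξ̄(x)` for `x ∉ 𝒩`, and `R(x)v = −v` for `x ∈ 𝒩`. -/
noncomputable def reflT (d : ℕ) (ξ : EuclideanSpace ℝ (Fin d) → EuclideanSpace ℝ (Fin d))
    (x v : EuclideanSpace ℝ (Fin d)) : EuclideanSpace ℝ (Fin d) :=
  if ξ x = 0 then -v else v - (2 * ⟪xibar d ξ x, v⟫) • xibar d ξ x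

/-- The bounce transform `Φ_bounce(x,v) = (x, R(x)v)`. -/
noncomputable def bounceT (d : ℕ) (ξ : EuclideanSpace ℝ (Fin d) → EuclideanSpace ℝ (Fin d))
    (z : EuclideanSpace ℝ (Fin d) × EuclideanSpace ℝ (Fin d)) :
    EuclideanSpace ℝ (Fin d) × EuclideanSpace ℝ (Fin d) :=
  (z.1, reflT d ξ z.1 z.2)

/-- The tangential projection `P(x)v = v − (ξ̄(x)ᵀv)ξ̄(x)`. -/
noncomputable def tangP (d : ℕ) (ξ : EuclideanSpace ℝ (Fin d) → EuclideanSpace ℝ (Fin d))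
    (x v : EuclideanSpace ℝ (Fin d)) : EuclideanSpace ℝ (Fin d) :=
  v - ⟪xibar d ξ x, v⟫ • xibar d ξ x

/-- The projection `𝐩(x,v) = (x, P(x)v)`. -/
noncomputable def pbf (d : ℕ) (ξ : EuclideanSpace ℝ (Fin d) → EuclideanSpace ℝ (Fin d))
    (z : EuclideanSpace ℝ (Fin d) × EuclideanSpace ℝ (Fin d)) :
    EuclideanSpace ℝ (Fin d) × EuclideanSpace ℝ (Fin d) :=
  (z.1, tangP d ξ z.1 z.2)

/-- The directional derivative `∂ξ̄(x)[u,w] = uᵀ(Dξ̄(x)w)`. -/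
noncomputable def dxib (d : ℕ) (ξ : EuclideanSpace ℝ (Fin d) → EuclideanSpace ℝ (Fin d))
    (x u w : EuclideanSpace ℝ (Fin d)) : ℝ :=
  ⟪u, fderiv ℝ (xibar d ξ) x w⟫

/-- The vector field `ã(x,v) = 2(P(x)v, −P(x)x)`. -/
noncomputable def atilde (d : ℕ) (ξ : EuclideanSpace ℝ (Fin d) → EuclideanSpace ℝ (Fin d))
    (x v : EuclideanSpace ℝ (Fin d)) :
    EuclideanSpace ℝ (Fin d) × EuclideanSpace ℝ (Fin d) :=
  ((2 : ℝ) • tangP d ξ x v, (-2 : ℝ) • tangP d ξ x x)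

/-- The vector `b̃(x,v)`, the unique vector satisfying
`uᵀb̃(x,v) = ∂P(x)[u,v,v] + ∂P(x)[u,R(x)v,R(x)v]` for all `u`, where
`∂P(x)[u,v,w] = −(ξ̄(x)ᵀv)∂ξ̄(x)[u,w] − (ξ̄(x)ᵀu)∂ξ̄(x)[v,w]`. -/
noncomputable def btilde (d : ℕ) (ξ : EuclideanSpace ℝ (Fin d) → EuclideanSpace ℝ (Fin d))
    (x v : EuclideanSpace ℝ (Fin d)) : EuclideanSpace ℝ (Fin d) :=
  (-⟪xibar d ξ x, v⟫) • fderiv ℝ (xibar d ξ) x v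
    - dxib d ξ x v v • xibar d ξ x
    + (-⟪xibar d ξ x, reflT d ξ x v⟫) • fderiv ℝ (xibar d ξ) x (reflT d ξ x v)
    - dxib d ξ x (reflT d ξ x v) (reflT d ξ x v) • xibar d ξ x

/-- The level set `ℳ_α = {x : U(x) = α}`. -/
def Mlevel (d : ℕ) (U : EuclideanSpace ℝ (Fin d) → ℝ) (α : ℝ) :
    Set (EuclideanSpace ℝ (Fin d)) :=
  {x | U x = α}

/-- The `ε`-perturbed level set `ℳ_α^ε`. -/
def Mpert (d : ℕ) (U : EuclideanSpace ℝ (Fin d) → ℝ) (α ε : ℝ) :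
    Set (EuclideanSpace ℝ (Fin d)) :=
  {x | ∃ y, ‖x - y‖ ≤ ε ∧ |U y - α| ≤ ε}

/-!
The map `(z, h) ↦ 𝐩(φ_h(z))` is `C²` wherever `ξ` does not vanish at the two positions visited by
`φ_h`, and its `h`-derivative at `h = 0` is `ã(z) + (0, b̃(z))`: differentiating through the two
rotations, the reflection and the projection, the terms along `Dξ̄` are simplified with
`⟪ξ̄, Dξ̄ u⟫ = 0`, which holds because `|ξ̄| = 1`.

For `z = (x, v)` in the compact set `K` given by `|x|² + |v|² ≤ r²` and `x ∈ closure ℳ_α^{ε/2}`,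
and for `h ≤ ε / (16 r)`, both positions visited by `φ_h` lie within `ε / 4` of `ℳ_α^{3ε/4}`,
hence in `ℳ_α^ε ⊆ 𝒩ᶜ`, so a second order Taylor bound holds uniformly on `K × [0, ε / (16 r)]`.
For larger `h < ε / r` the error is bounded outright, since `φ_h` preserves `|x|² + |v|²` and `𝐩`
does not increase norms, and a bounded quantity is `O(h²)` once `h` is bounded below.
-/

open Set

section ProdDeriv

variable {𝕜 E F : Type*} [NontriviallyNormedField 𝕜] [NormedAddCommGroup E] [NormedSpace 𝕜 E]
  [NormedAddCommGroup F] [NormedSpace 𝕜 F] {γ : 𝕜 → E × F} {γ' : E × F} {t : 𝕜}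

theorem HasDerivAt.fst (h : HasDerivAt γ γ' t) : HasDerivAt (fun s => (γ s).1) γ'.1 t :=
  (hasFDerivAt_fst (𝕜 := 𝕜) (p := γ t)).comp_hasDerivAt t h

theorem HasDerivAt.snd (h : HasDerivAt γ γ' t) : HasDerivAt (fun s => (γ s).2) γ'.2 t :=
  (hasFDerivAt_snd (𝕜 := 𝕜) (p := γ t)).comp_hasDerivAt t h

end ProdDeriv

section ProdNorm

variable {E F : Type*}

theorem norm_le_of_energy_le [SeminormedAddCommGroup E] [SeminormedAddCommGroup F] {z : E × F}
    {r : ℝ} (hr : 0 ≤ r) (hz : ‖z.1‖ ^ 2 + ‖z.2‖ ^ 2 ≤ r ^ 2) : ‖z‖ ≤ r := by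
  rw [Prod.norm_def]
  refine max_le ?_ ?_ <;> apply le_of_sq_le_sq _ hr <;> nlinarith [sq_nonneg ‖z.1‖, sq_nonneg ‖z.2‖]

theorem isCompact_setOf_energy_le_and_fst_mem [NormedAddCommGroup E] [NormedAddCommGroup F]
    [ProperSpace E] [ProperSpace F] {S : Set E} (hS : IsClosed S) {r : ℝ} (hr : 0 ≤ r) :
    IsCompact {z : E × F | ‖z.1‖ ^ 2 + ‖z.2‖ ^ 2 ≤ r ^ 2 ∧ z.1 ∈ S} := by
  refine (isCompact_closedBall 0 r).of_isClosed_subset ?_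
    fun z hz => mem_closedBall_zero_iff.2 (norm_le_of_energy_le hr hz.1)
  exact (isClosed_le (f := fun z : E × F => ‖z.1‖ ^ 2 + ‖z.2‖ ^ 2) (by fun_prop)
    continuous_const).inter (hS.preimage continuous_fst)

end ProdNorm

section Taylor

variable {E G : Type*} [NormedAddCommGroup E] [NormedSpace ℝ E]
  [NormedAddCommGroup G] [NormedSpace ℝ G]

theorem norm_sub_sub_smul_le_of_norm_deriv_sub_le {g g' : ℝ → G} {M t : ℝ} (hM : 0 ≤ M)
    (ht : 0 ≤ t) (hg : ∀ s ∈ Icc 0 t, HasDerivAt g (g' s) s)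
    (hg' : ∀ s ∈ Icc 0 t, ‖g' s - g' 0‖ ≤ M * s) :
    ‖g t - g 0 - t • g' 0‖ ≤ M * t ^ 2 := by
  have hderiv : ∀ s ∈ Icc 0 t, HasDerivWithinAt (fun s => g s - s • g' 0) (g' s - g' 0)
      (Icc 0 t) s := fun s hs =>
    ((hg s hs).sub (by simpa using (hasDerivAt_id s).smul_const (g' 0))).hasDerivWithinAt
  have hbound : ∀ s ∈ Ico 0 t, ‖g' s - g' 0‖ ≤ M * t := fun s hs =>
    (hg' s (Ico_subset_Icc_self hs)).trans (by gcongr; exact hs.2.le)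
  have := norm_image_sub_le_of_norm_deriv_le_segment' hderiv hbound t (right_mem_Icc.2 ht)
  simpa [sub_right_comm, sq, mul_assoc] using this

theorem exists_norm_sub_sub_smul_le_mul_sq {F : E × ℝ → G} {D : E → G} {K : Set E} {h0 : ℝ}
    (hK : IsCompact K) (hF : ∀ z ∈ K, ∀ t ∈ Icc 0 h0, ContDiffAt ℝ 2 F (z, t))
    (hD : ∀ z ∈ K, HasDerivAt (fun t => F (z, t)) (D z) 0) :
    ∃ M, ∀ z ∈ K, ∀ t ∈ Icc 0 h0, ‖F (z, t) - F (z, 0) - t • D z‖ ≤ M * t ^ 2 := by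
  -- `ContDiffAt` is an open condition, so this is an open neighbourhood of `K × [0, h0]`
  set Ω := {p | ContDiffAt ℝ 2 F p}
  have hΩ : IsOpen Ω := isOpen_iff_mem_nhds.2 fun p hp =>
    (show ContDiffAt ℝ 2 F p from hp).eventually (by simp)
  set Ψ : E × ℝ → G := fun p => fderiv ℝ F p (0, 1)
  have hFΩ : ContDiffOn ℝ 2 F Ω := fun p hp =>
    (show ContDiffAt ℝ 2 F p from hp).contDiffWithinAt
  have hΨ : ContDiffOn ℝ 1 Ψ Ω :=
    (hFΩ.fderiv_of_isOpen hΩ (by norm_num)).clm_apply contDiffOn_const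
  have hsub : K ×ˢ Icc 0 h0 ⊆ Ω := fun p hp => hF p.1 hp.1 p.2 hp.2
  obtain ⟨M, hM⟩ := (hK.prod isCompact_Icc).exists_bound_of_continuousOn
    ((hΨ.continuousOn_fderiv_of_isOpen hΩ le_rfl).mono hsub)
  have hline : ∀ {Φ : E × ℝ → G} {z t}, DifferentiableAt ℝ Φ (z, t) →
      HasDerivAt (fun s => Φ (z, s)) (fderiv ℝ Φ (z, t) (0, 1)) t := fun hΦ =>
    hΦ.hasFDerivAt.comp_hasDerivAt _ ((hasDerivAt_const _ _).prodMk (hasDerivAt_id _))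
  refine ⟨max M 0, fun z hz t ht => ?_⟩
  have hF_at : ∀ s ∈ Icc 0 t, ContDiffAt ℝ 2 F (z, s) := fun s hs =>
    hsub ⟨hz, hs.1, hs.2.trans ht.2⟩
  have hΨ0 : Ψ (z, 0) = D z :=
    (hline ((hF_at 0 (left_mem_Icc.2 ht.1)).differentiableAt two_ne_zero)).unique (hD z hz)
  rw [← hΨ0]
  refine norm_sub_sub_smul_le_of_norm_deriv_sub_le (le_max_right _ _) ht.1
    (fun s hs => hline ((hF_at s hs).differentiableAt two_ne_zero)) fun s hs => ?_
  have hΨ' : ∀ u ∈ Icc 0 s, HasDerivWithinAt (fun u => Ψ (z, u)) (fderiv ℝ Ψ (z, u) (0, 1))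
      (Icc 0 s) u := fun u hu => by
    have hu' := hF_at u ⟨hu.1, hu.2.trans hs.2⟩
    exact (hline ((hΨ _ hu').contDiffAt (hΩ.mem_nhds hu') |>.differentiableAt one_ne_zero))
      |>.hasDerivWithinAt
  refine norm_image_sub_le_of_norm_deriv_le_segment' (C := max M 0) hΨ' (fun u hu => ?_) s
    (right_mem_Icc.2 hs.1) |>.trans_eq (by ring)
  calc ‖fderiv ℝ Ψ (z, u) (0, 1)‖ ≤ ‖fderiv ℝ Ψ (z, u)‖ * ‖((0 : E), (1 : ℝ))‖ :=
        ContinuousLinearMap.le_opNorm _ _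
    _ ≤ max M 0 := by
        rw [Prod.norm_def, norm_zero, norm_one, max_eq_right zero_le_one, mul_one]
        exact (hM _ ⟨hz, hu.1, hu.2.le.trans (hs.2.trans ht.2)⟩).trans (le_max_left _ _)

theorem exists_pos_norm_sub_sub_smul_le_sq_of_norm_le {ι : Type*} {S : Set ι} {f : ι → ℝ → G}
    {D : ι → G} {h0 T R M : ℝ} (hh0 : 0 < h0) (hR : ∀ i ∈ S, ∀ h, 0 ≤ h → h < T → ‖f i h‖ ≤ R)
    (hM : ∀ i ∈ S, ∀ h, 0 ≤ h → h ≤ h0 → ‖f i h - f i 0 - h • D i‖ ≤ M * h ^ 2) :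
    ∃ C, 0 < C ∧ ∀ i ∈ S, ∀ h, 0 < h → h < T → ‖f i h - f i 0 - h • D i‖ ≤ h ^ 2 * C := by
  refine ⟨4 * |R| / h0 ^ 2 + |M| + 1, by positivity, fun i hi h hh hT => ?_⟩
  rcases le_or_gt h h0 with hsmall | hlarge
  · nlinarith [hM i hi h hh.le hsmall, le_abs_self M, sq_nonneg h,
      div_nonneg (mul_nonneg zero_le_four (abs_nonneg R)) (sq_nonneg h0)]
  -- beyond `h0`, the derivative `D i` is controlled by the expansion at `h0` itself
  have hR0 := hR i hi 0 le_rfl (hh.trans hT)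
  have hRh0 := hR i hi h0 hh0.le (hlarge.trans hT)
  have hRh := hR i hi h hh.le hT
  have hDi : h0 * ‖D i‖ ≤ 2 * R + M * h0 ^ 2 := by
    have := hM i hi h0 hh0.le le_rfl
    have h' : h0 • D i = (f i h0 - f i 0) - (f i h0 - f i 0 - h0 • D i) := by abel
    calc h0 * ‖D i‖ = ‖h0 • D i‖ := by rw [norm_smul, Real.norm_of_nonneg hh0.le]
      _ ≤ ‖f i h0‖ + ‖f i 0‖ + M * h0 ^ 2 := by
          rw [h']; exact (norm_sub_le _ _).trans (by gcongr; exact norm_sub_le _ _)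
      _ ≤ 2 * R + M * h0 ^ 2 := by linarith
  have hlin : ‖f i h - f i 0 - h • D i‖ ≤ 2 * R + h * ‖D i‖ := by
    calc _ ≤ ‖f i h‖ + ‖f i 0‖ + ‖h • D i‖ :=
          (norm_sub_le _ _).trans (by gcongr; exact norm_sub_le _ _)
      _ ≤ 2 * R + h * ‖D i‖ := by rw [norm_smul, Real.norm_of_nonneg hh.le]; linarith
  have hu : 1 ≤ h / h0 := (one_le_div hh0).2 hlarge.le
  have hX : 0 ≤ 2 * R + M * h0 ^ 2 := (mul_nonneg hh0.le (norm_nonneg _)).trans hDi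
  have hX' : 2 * R + M * h0 ^ 2 ≤ 2 * |R| + |M| * h0 ^ 2 := by
    gcongr
    · exact le_abs_self R
    · exact le_abs_self M
  calc ‖f i h - f i 0 - h • D i‖ ≤ 2 * R + h / h0 * (h0 * ‖D i‖) := by
        rwa [← mul_assoc, div_mul_cancel₀ _ hh0.ne']
    _ ≤ (h / h0) ^ 2 * (2 * |R|) + (h / h0) ^ 2 * (2 * |R| + |M| * h0 ^ 2) := by
        gcongr ?_ + ?_
        · nlinarith [le_abs_self R, abs_nonneg R, one_le_pow₀ (n := 2) hu]
        · have hX'0 : 0 ≤ 2 * |R| + |M| * h0 ^ 2 := hX.trans hX'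
          calc h / h0 * (h0 * ‖D i‖) ≤ h / h0 * (2 * |R| + |M| * h0 ^ 2) := by
                gcongr; exact hDi.trans hX'
            _ ≤ (h / h0) ^ 2 * (2 * |R| + |M| * h0 ^ 2) := by
                nlinarith [mul_nonneg (mul_nonneg (zero_le_one.trans hu) (sub_nonneg.2 hu)) hX'0]
    _ ≤ h ^ 2 * (4 * |R| / h0 ^ 2 + |M| + 1) := by
        rw [div_pow]; field_simp; nlinarith [sq_nonneg h, sq_nonneg h0, abs_nonneg R]

end Taylor

section Level

variable {d : ℕ} {U : EuclideanSpace ℝ (Fin d) → ℝ} {α δ δ' : ℝ} {x x' : EuclideanSpace ℝ (Fin d)}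

theorem mem_Mpert_of_norm_sub_add_le (hx : x ∈ Mpert d U α δ) (h : ‖x' - x‖ + δ ≤ δ') :
    x' ∈ Mpert d U α δ' := by
  obtain ⟨y, hxy, hy⟩ := hx
  refine ⟨y, ?_, hy.trans (by linarith [norm_nonneg (x' - x)])⟩
  calc ‖x' - y‖ = ‖(x' - x) + (x - y)‖ := by rw [sub_add_sub_cancel]
    _ ≤ δ' := (norm_add_le _ _).trans (by linarith)

theorem closure_Mpert_subset (h : δ < δ') : closure (Mpert d U α δ) ⊆ Mpert d U α δ' := by
  intro x hx
  obtain ⟨w, hw, hxw⟩ := Metric.mem_closure_iff.1 hx (δ' - δ) (sub_pos.2 h)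
  exact mem_Mpert_of_norm_sub_add_le hw (by rw [← dist_eq_norm]; linarith)

end Level

section Weave

variable {d : ℕ} {ξ : EuclideanSpace ℝ (Fin d) → EuclideanSpace ℝ (Fin d)}
  {x : EuclideanSpace ℝ (Fin d)} {z : EuclideanSpace ℝ (Fin d) × EuclideanSpace ℝ (Fin d)}

local notation "𝔼" => EuclideanSpace ℝ (Fin d)

noncomputable def weaveT (d : ℕ) (ξ : EuclideanSpace ℝ (Fin d) → EuclideanSpace ℝ (Fin d))
    (h : ℝ) (z : EuclideanSpace ℝ (Fin d) × EuclideanSpace ℝ (Fin d)) :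
    EuclideanSpace ℝ (Fin d) × EuclideanSpace ℝ (Fin d) :=
  circleT d h (bounceT d ξ (circleT d h z))

theorem xibar_of_eq_zero (hx : ξ x = 0) : xibar d ξ x = 0 := by simp [xibar, hx]

theorem norm_xibar (hx : ξ x ≠ 0) : ‖xibar d ξ x‖ = 1 := by
  rw [xibar, norm_smul, norm_inv, norm_norm, inv_mul_cancel₀ (norm_ne_zero_iff.2 hx)]

theorem inner_xibar_self (hx : ξ x ≠ 0) : ⟪xibar d ξ x, xibar d ξ x⟫ = 1 := by
  rw [real_inner_self_eq_norm_sq, norm_xibar hx, one_pow]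

theorem reflT_of_ne (hx : ξ x ≠ 0) (v : 𝔼) :
    reflT d ξ x v = v - (2 : ℝ) • (⟪xibar d ξ x, v⟫ • xibar d ξ x) := by
  rw [reflT, if_neg hx, mul_smul]

theorem norm_reflT (x v : 𝔼) : ‖reflT d ξ x v‖ = ‖v‖ := by
  by_cases hx : ξ x = 0
  · simp [reflT, hx]
  rw [reflT_of_ne hx, ← sq_eq_sq₀ (norm_nonneg _) (norm_nonneg _), ← real_inner_self_eq_norm_sq,
    ← real_inner_self_eq_norm_sq]
  simp only [inner_sub_left, inner_sub_right, inner_smul_left, inner_smul_right,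
    inner_xibar_self hx, real_inner_comm v, RCLike.conj_to_real]
  ring

theorem norm_tangP_le (x v : 𝔼) : ‖tangP d ξ x v‖ ≤ ‖v‖ := by
  by_cases hx : ξ x = 0
  · simp [tangP, xibar_of_eq_zero hx]
  rw [← sq_le_sq₀ (norm_nonneg _) (norm_nonneg _), ← real_inner_self_eq_norm_sq,
    ← real_inner_self_eq_norm_sq, tangP]
  simp only [inner_sub_left, inner_sub_right, inner_smul_left, inner_smul_right,
    inner_xibar_self hx, real_inner_comm v, RCLike.conj_to_real]
  nlinarith [sq_nonneg ⟪xibar d ξ x, v⟫]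

theorem norm_pbf_le (z : 𝔼 × 𝔼) : ‖pbf d ξ z‖ ≤ ‖z‖ := by
  rw [pbf, Prod.norm_def, Prod.norm_def]
  exact max_le_max le_rfl (norm_tangP_le _ _)

theorem circleT_energy (h : ℝ) (z : 𝔼 × 𝔼) :
    ‖(circleT d h z).1‖ ^ 2 + ‖(circleT d h z).2‖ ^ 2 = ‖z.1‖ ^ 2 + ‖z.2‖ ^ 2 := by
  simp only [circleT, ← real_inner_self_eq_norm_sq, inner_add_left, inner_add_right,
    inner_smul_left, inner_smul_right, RCLike.conj_to_real, real_inner_comm z.1 z.2]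
  linear_combination (⟪z.1, z.1⟫ + ⟪z.2, z.2⟫) * Real.sin_sq_add_cos_sq h

theorem weaveT_energy (h : ℝ) (z : 𝔼 × 𝔼) :
    ‖(weaveT d ξ h z).1‖ ^ 2 + ‖(weaveT d ξ h z).2‖ ^ 2 = ‖z.1‖ ^ 2 + ‖z.2‖ ^ 2 := by
  rw [weaveT, circleT_energy, bounceT, norm_reflT, circleT_energy]

theorem norm_fst_circleT_sub_le (h : ℝ) (z : 𝔼 × 𝔼) :
    ‖(circleT d h z).1 - z.1‖ ≤ |h| * (‖z.1‖ + ‖z.2‖) := by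
  have hcos : |Real.cos h - 1| ≤ |h| := by simpa using Real.abs_cos_sub_cos_le h 0
  calc ‖(circleT d h z).1 - z.1‖ = ‖(Real.cos h - 1) • z.1 + Real.sin h • z.2‖ := by
        rw [circleT]; congr 1; module
    _ ≤ |Real.cos h - 1| * ‖z.1‖ + |Real.sin h| * ‖z.2‖ := by
        refine (norm_add_le _ _).trans_eq ?_
        rw [norm_smul, norm_smul, Real.norm_eq_abs, Real.norm_eq_abs]
    _ ≤ |h| * (‖z.1‖ + ‖z.2‖) := by
        rw [mul_add]
        exact add_le_add (mul_le_mul_of_nonneg_right hcos (norm_nonneg _))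
          (mul_le_mul_of_nonneg_right Real.abs_sin_le_abs (norm_nonneg _))

theorem norm_fst_circleT_sub_le_of_energy_le {r h : ℝ} (hr : 0 ≤ r)
    (hz : ‖z.1‖ ^ 2 + ‖z.2‖ ^ 2 ≤ r ^ 2) : ‖(circleT d h z).1 - z.1‖ ≤ 2 * |h| * r := by
  have hzr := norm_le_of_energy_le hr hz
  calc ‖(circleT d h z).1 - z.1‖ ≤ |h| * (‖z.1‖ + ‖z.2‖) := norm_fst_circleT_sub_le h z
    _ ≤ |h| * (r + r) := by
        gcongr
        exacts [(norm_fst_le z).trans hzr, (norm_snd_le z).trans hzr]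
    _ = 2 * |h| * r := by ring

theorem norm_fst_weaveT_sub_le {r h : ℝ} (hr : 0 ≤ r) (hz : ‖z.1‖ ^ 2 + ‖z.2‖ ^ 2 ≤ r ^ 2) :
    ‖(weaveT d ξ h z).1 - z.1‖ ≤ 4 * |h| * r := by
  set w := bounceT d ξ (circleT d h z)
  have hw : ‖w.1‖ ^ 2 + ‖w.2‖ ^ 2 ≤ r ^ 2 := by
    simp only [w, _root_.bounceT, norm_reflT]; rwa [circleT_energy]
  calc ‖(weaveT d ξ h z).1 - z.1‖ = ‖((circleT d h w).1 - w.1) + ((circleT d h z).1 - z.1)‖ := by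
        rw [weaveT]; congr 1; simp [w, _root_.bounceT]
    _ ≤ 2 * |h| * r + 2 * |h| * r :=
        (norm_add_le _ _).trans (add_le_add (norm_fst_circleT_sub_le_of_energy_le hr hw)
          (norm_fst_circleT_sub_le_of_energy_le hr hz))
    _ = 4 * |h| * r := by ring

theorem contDiffAt_xibar {n : WithTop ℕ∞} (hξ : ContDiffAt ℝ n ξ x) (hx : ξ x ≠ 0) :
    ContDiffAt ℝ n (xibar d ξ) x :=
  ((hξ.norm ℝ hx).inv (norm_ne_zero_iff.2 hx)).smul hξ

theorem differentiableAt_xibar (hξ : DifferentiableAt ℝ ξ x) (hx : ξ x ≠ 0) :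
    DifferentiableAt ℝ (xibar d ξ) x :=
  ((hξ.norm ℝ hx).inv (norm_ne_zero_iff.2 hx)).smul hξ

theorem inner_xibar_fderiv_xibar (hξ : DifferentiableAt ℝ ξ x) (hx : ξ x ≠ 0) (u : 𝔼) :
    ⟪xibar d ξ x, fderiv ℝ (xibar d ξ) x u⟫ = 0 := by
  have he := differentiableAt_xibar hξ hx
  have hconst : (fun y => ⟪xibar d ξ y, xibar d ξ y⟫) =ᶠ[nhds x] fun _ => (1 : ℝ) := by
    filter_upwards [hξ.continuousAt.eventually_ne hx] with y hy using inner_xibar_self hy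
  have := fderiv_inner_apply ℝ he he u
  rw [hconst.fderiv_eq, fderiv_const_apply, zero_apply,
    real_inner_comm (fderiv ℝ (xibar d ξ) x u)] at this
  rw [real_inner_comm]
  linarith

/-- The derivative of the normal component `(x, v) ↦ ⟪ξ̄ x, v⟫ ξ̄ x` at `z` in the direction `w`. -/
noncomputable def normalCompDeriv (d : ℕ) (ξ : EuclideanSpace ℝ (Fin d) → EuclideanSpace ℝ (Fin d))
    (z w : EuclideanSpace ℝ (Fin d) × EuclideanSpace ℝ (Fin d)) : EuclideanSpace ℝ (Fin d) :=
  ⟪xibar d ξ z.1, z.2⟫ • fderiv ℝ (xibar d ξ) z.1 w.1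
    + (⟪xibar d ξ z.1, w.2⟫ + ⟪fderiv ℝ (xibar d ξ) z.1 w.1, z.2⟫) • xibar d ξ z.1

variable {γ : ℝ → EuclideanSpace ℝ (Fin d) × EuclideanSpace ℝ (Fin d)}
  {γ' : EuclideanSpace ℝ (Fin d) × EuclideanSpace ℝ (Fin d)} {t : ℝ}

theorem HasDerivAt.inner_xibar_smul_xibar (hγ : HasDerivAt γ γ' t)
    (hξ : DifferentiableAt ℝ ξ (γ t).1) (hx : ξ (γ t).1 ≠ 0) :
    HasDerivAt (fun s => ⟪xibar d ξ (γ s).1, (γ s).2⟫ • xibar d ξ (γ s).1)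
      (normalCompDeriv d ξ (γ t) γ') t := by
  have he := (differentiableAt_xibar hξ hx).hasFDerivAt.comp_hasDerivAt t hγ.fst
  exact (he.inner ℝ hγ.snd).fun_smul he

theorem HasDerivAt.pbf (hγ : HasDerivAt γ γ' t) (hξ : DifferentiableAt ℝ ξ (γ t).1)
    (hx : ξ (γ t).1 ≠ 0) :
    HasDerivAt (fun s => pbf d ξ (γ s)) (γ'.1, γ'.2 - normalCompDeriv d ξ (γ t) γ') t :=
  hγ.fst.prodMk (hγ.snd.sub (hγ.inner_xibar_smul_xibar hξ hx))

theorem HasDerivAt.bounceT (hγ : HasDerivAt γ γ' t) (hξ : DifferentiableAt ℝ ξ (γ t).1)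
    (hx : ξ (γ t).1 ≠ 0) :
    HasDerivAt (fun s => bounceT d ξ (γ s))
      (γ'.1, γ'.2 - (2 : ℝ) • normalCompDeriv d ξ (γ t) γ') t := by
  have hlin : HasDerivAt (fun s => ((γ s).1, (γ s).2 - (2 : ℝ) •
      (⟪xibar d ξ (γ s).1, (γ s).2⟫ • xibar d ξ (γ s).1)))
      (γ'.1, γ'.2 - (2 : ℝ) • normalCompDeriv d ξ (γ t) γ') t :=
    hγ.fst.prodMk (hγ.snd.sub ((hγ.inner_xibar_smul_xibar hξ hx).const_smul (2 : ℝ)))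
  refine hlin.congr_of_eventuallyEq ?_
  filter_upwards [hγ.fst.continuousAt.eventually (hξ.continuousAt.eventually_ne hx)] with s hs
  rw [_root_.bounceT, reflT_of_ne hs]

theorem hasDerivAt_circleT_zero (hγ : HasDerivAt γ γ' 0) :
    HasDerivAt (fun s => circleT d s (γ s)) (((γ 0).2, -(γ 0).1) + γ') 0 := by
  have hcos : HasDerivAt Real.cos 0 0 := by simpa using Real.hasDerivAt_cos 0
  have hsin : HasDerivAt Real.sin 1 0 := by simpa using Real.hasDerivAt_sin 0
  have := ((hcos.fun_smul hγ.fst).add (hsin.fun_smul hγ.snd)).prodMk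
    ((hsin.fun_neg.fun_smul hγ.fst).add (hcos.fun_smul hγ.snd))
  refine this.congr_deriv ?_
  simp only [Real.cos_zero, Real.sin_zero, one_smul, zero_smul, neg_zero, Prod.ext_iff]
  constructor <;> simp; abel

theorem circleT_zero (z : 𝔼 × 𝔼) : circleT d 0 z = z := by simp [circleT]

theorem hasDerivAt_pbf_weaveT_zero (hξ : DifferentiableAt ℝ ξ z.1) (hz : ξ z.1 ≠ 0) :
    HasDerivAt (fun h => pbf d ξ (weaveT d ξ h z))
      (atilde d ξ z.1 z.2 + ((0 : 𝔼), btilde d ξ z.1 z.2)) 0 := by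
  have h₁ : HasDerivAt (fun s => circleT d s z) (z.2, -z.1) 0 := by
    simpa [circleT_zero] using hasDerivAt_circleT_zero (hasDerivAt_const (0 : ℝ) z)
  have h₂ := h₁.bounceT (by rwa [circleT_zero]) (by rwa [circleT_zero])
  have h₃ := hasDerivAt_circleT_zero h₂
  have h₄ := h₃.pbf (by simpa [circleT_zero, _root_.bounceT])
    (by simpa [circleT_zero, _root_.bounceT])
  refine h₄.congr_deriv ?_
  have hDe : ∀ u, ⟪xibar d ξ z.1, fderiv ℝ (xibar d ξ) z.1 u⟫ = 0 :=
    inner_xibar_fderiv_xibar hξ hz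
  have hDe' : ∀ u, ⟪fderiv ℝ (xibar d ξ) z.1 u, xibar d ξ z.1⟫ = 0 := fun u => by
    rw [real_inner_comm]; exact hDe u
  have hee : ⟪xibar d ξ z.1, xibar d ξ z.1⟫ = 1 := inner_xibar_self hz
  simp only [circleT_zero, _root_.bounceT, normalCompDeriv, atilde, btilde, dxib, tangP,
    reflT_of_ne hz, Prod.ext_iff, Prod.fst_add, Prod.snd_add]
  constructor
  · module
  simp only [inner_add_right, inner_sub_right, inner_smul_right, inner_neg_right, inner_add_left,
    inner_sub_left, inner_smul_left, map_add, map_sub, map_smul, hee, hDe,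
    hDe', RCLike.conj_to_real, real_inner_comm z.2 (fderiv ℝ (xibar d ξ) z.1 _)]
  module

theorem pbf_weaveT_zero (hz : ξ z.1 ≠ 0) : pbf d ξ (weaveT d ξ 0 z) = pbf d ξ z := by
  simp only [weaveT, circleT_zero, _root_.bounceT, pbf, tangP, reflT_of_ne hz, Prod.mk.injEq,
    true_and, inner_sub_right, inner_smul_right, inner_xibar_self hz]
  module

section Smooth

variable {n : WithTop ℕ∞}

theorem contDiffAt_inner_xibar_smul_xibar (hξ : ContDiffAt ℝ n ξ z.1) (hz : ξ z.1 ≠ 0) :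
    ContDiffAt ℝ n (fun w : 𝔼 × 𝔼 => ⟪xibar d ξ w.1, w.2⟫ • xibar d ξ w.1) z :=
  have he := (contDiffAt_xibar hξ hz).comp z contDiffAt_fst
  (he.inner ℝ contDiffAt_snd).smul he

theorem contDiffAt_pbf (hξ : ContDiffAt ℝ n ξ z.1) (hz : ξ z.1 ≠ 0) :
    ContDiffAt ℝ n (pbf d ξ) z :=
  contDiffAt_fst.prodMk (contDiffAt_snd.sub (contDiffAt_inner_xibar_smul_xibar hξ hz))

theorem contDiffAt_bounceT (hξ : ContDiffAt ℝ n ξ z.1) (hz : ξ z.1 ≠ 0) :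
    ContDiffAt ℝ n (bounceT d ξ) z := by
  refine (contDiffAt_fst.prodMk (contDiffAt_snd.sub
    ((contDiffAt_inner_xibar_smul_xibar hξ hz).const_smul (2 : ℝ)))).congr_of_eventuallyEq ?_
  filter_upwards [continuousAt_fst.eventually (hξ.continuousAt.eventually_ne hz)] with w hw
  rw [_root_.bounceT, reflT_of_ne hw]

theorem contDiff_circleT : ContDiff ℝ n (fun p : ℝ × (𝔼 × 𝔼) => circleT d p.1 p.2) :=
  ((Real.contDiff_cos.comp contDiff_fst).smul contDiff_snd.fst).add
      ((Real.contDiff_sin.comp contDiff_fst).smul contDiff_snd.snd) |>.prodMk <|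
    ((Real.contDiff_sin.comp contDiff_fst).neg.smul contDiff_snd.fst).add
      ((Real.contDiff_cos.comp contDiff_fst).smul contDiff_snd.snd)

theorem contDiffAt_pbf_weaveT {t : ℝ} (hξ : ContDiff ℝ n ξ) (h₁ : ξ (circleT d t z).1 ≠ 0)
    (h₂ : ξ (weaveT d ξ t z).1 ≠ 0) :
    ContDiffAt ℝ n (fun p : (𝔼 × 𝔼) × ℝ => pbf d ξ (weaveT d ξ p.2 p.1)) (z, t) := by
  have hcircle : ContDiffAt ℝ n (fun p : (𝔼 × 𝔼) × ℝ => circleT d p.2 p.1) (z, t) :=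
    (contDiff_circleT.comp (contDiff_snd.prodMk contDiff_fst)).contDiffAt
  have hbounce := (contDiffAt_bounceT hξ.contDiffAt h₁).comp (z, t) hcircle
  have hweave := contDiff_circleT.contDiffAt.comp (z, t) (contDiffAt_snd.prodMk hbounce)
  exact (contDiffAt_pbf hξ.contDiffAt h₂).comp (z, t) hweave

end Smooth

end Weave

theorem fst_circleT_mem_Mpert_and_fst_weaveT_mem_Mpert {d : ℕ}
    {ξ : EuclideanSpace ℝ (Fin d) → EuclideanSpace ℝ (Fin d)} {U : EuclideanSpace ℝ (Fin d) → ℝ}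
    {α r ε t : ℝ} {z : EuclideanSpace ℝ (Fin d) × EuclideanSpace ℝ (Fin d)} (hr : 0 < r)
    (hε : 0 < ε) (hz : ‖z.1‖ ^ 2 + ‖z.2‖ ^ 2 ≤ r ^ 2) (hx : z.1 ∈ closure (Mpert d U α (ε / 2)))
    (ht : t ∈ Icc 0 (ε / (16 * r))) :
    (circleT d t z).1 ∈ Mpert d U α ε ∧ (weaveT d ξ t z).1 ∈ Mpert d U α ε := by
  have hx' := closure_Mpert_subset (δ' := 3 * ε / 4) (by linarith) hx
  have hmove : 4 * |t| * r ≤ ε / 4 := by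
    rw [abs_of_nonneg ht.1]; nlinarith [div_mul_cancel₀ ε (by positivity : 16 * r ≠ 0), ht.2]
  refine ⟨mem_Mpert_of_norm_sub_add_le hx' ?_, mem_Mpert_of_norm_sub_add_le hx' ?_⟩
  · nlinarith [norm_fst_circleT_sub_le_of_energy_le (h := t) hr.le hz, abs_nonneg t]
  · linarith [norm_fst_weaveT_sub_le (ξ := ξ) (h := t) hr.le hz]

theorem stmt_13_general (d : ℕ) (U : EuclideanSpace ℝ (Fin d) → ℝ)
    (ξ : EuclideanSpace ℝ (Fin d) → EuclideanSpace ℝ (Fin d))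
    (hξ_C2 : ContDiff ℝ 2 ξ)
    (α r : ℝ) (hr : 0 < r)
    (ε : ℝ) (hε : 0 < ε) (hεsub : Mpert d U α ε ⊆ {x | ξ x ≠ 0}) :
    -- the constant `C(r)` of the potential-energy deviation lemma
    let Cr : ℝ := r * (⨆ y : Metric.closedBall (0 : EuclideanSpace ℝ (Fin d)) r, ‖ξ ↑y‖)
      + r ^ 2 * (⨆ y : Metric.closedBall (0 : EuclideanSpace ℝ (Fin d)) r, ‖fderiv ℝ ξ ↑y‖)
    ∃ C : ℝ, 0 < C ∧
      ∀ (z : EuclideanSpace ℝ (Fin d) × EuclideanSpace ℝ (Fin d)) (h : ℝ),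
        ‖z.1‖ ^ 2 + ‖z.2‖ ^ 2 ≤ r ^ 2 → z.1 ∈ Mpert d U α (ε / 2) →
        0 < h → h < min (ε / r) (Real.sqrt (ε / (2 * Cr))) →
        ‖pbf d ξ (circleT d h (bounceT d ξ (circleT d h z))) - pbf d ξ z
            - h • (atilde d ξ z.1 z.2 + ((0 : EuclideanSpace ℝ (Fin d)), btilde d ξ z.1 z.2))‖
          ≤ h ^ 2 * C := by
  intro Cr
  set K := {z : EuclideanSpace ℝ (Fin d) × EuclideanSpace ℝ (Fin d) |
    ‖z.1‖ ^ 2 + ‖z.2‖ ^ 2 ≤ r ^ 2 ∧ z.1 ∈ closure (Mpert d U α (ε / 2))}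
  have hK : IsCompact K := isCompact_setOf_energy_le_and_fst_mem isClosed_closure hr.le
  have hdom : ∀ z ∈ K, ∀ t ∈ Icc 0 (ε / (16 * r)),
      ξ (circleT d t z).1 ≠ 0 ∧ ξ (weaveT d ξ t z).1 ≠ 0 := fun z hz t ht =>
    (fst_circleT_mem_Mpert_and_fst_weaveT_mem_Mpert hr hε hz.1 hz.2 ht).imp
      (fun h => hεsub h) (fun h => hεsub h)
  have hz0 : ∀ z ∈ K, ξ z.1 ≠ 0 := fun z hz => by
    simpa [circleT_zero] using (hdom z hz 0 ⟨le_rfl, by positivity⟩).1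
  obtain ⟨M, hM⟩ := exists_norm_sub_sub_smul_le_mul_sq
    (F := fun p => pbf d ξ (weaveT d ξ p.2 p.1)) hK
    (fun z hz t ht => contDiffAt_pbf_weaveT hξ_C2 (hdom z hz t ht).1 (hdom z hz t ht).2)
    (fun z hz => hasDerivAt_pbf_weaveT_zero (hξ_C2.differentiable two_ne_zero _) (hz0 z hz))
  obtain ⟨C, hC, hbound⟩ := exists_pos_norm_sub_sub_smul_le_sq_of_norm_le (S := K)
    (f := fun z h => pbf d ξ (weaveT d ξ h z)) (T := ε / r) (R := r)
    (by positivity : 0 < ε / (16 * r))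
    (fun z hz h _ _ => (norm_pbf_le _).trans
      (norm_le_of_energy_le hr.le ((weaveT_energy h z).le.trans hz.1)))
    (fun z hz h h0 hh => hM z hz h ⟨h0, hh⟩)
  refine ⟨C, hC, fun z h hz hx hh hlt => ?_⟩
  have hzK : z ∈ K := ⟨hz, subset_closure hx⟩
  rw [← pbf_weaveT_zero (hz0 z hzK)]
  exact hbound z hzK h hh (hlt.trans_le (min_le_left _ _))

/-- Short-time expansion of the Weave transform: on `{|z| ≤ r} ∩ (ℳ_α^{ε/2} × ℝ^d)`,
`𝐩(φ_h(z)) = 𝐩(z) + h(ã(z) + (0, b̃(z))) + O(h²)` uniformly. -/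
theorem stmt_13 (d : ℕ) (U : EuclideanSpace ℝ (Fin d) → ℝ)
    (ξ : EuclideanSpace ℝ (Fin d) → EuclideanSpace ℝ (Fin d))
    (hgrad : ∀ x, HasGradientAt U (ξ x) x) (hξ_C2 : ContDiff ℝ 2 ξ)
    (α r : ℝ) (hr : 0 < r)
    (hne : (Mlevel d U α ∩ {x | ξ x ≠ 0}).Nonempty)
    (ε : ℝ) (hε : 0 < ε) (hεsub : Mpert d U α ε ⊆ {x | ξ x ≠ 0}) :
    -- the constant `C(r)` of the potential-energy deviation lemma
    let Cr : ℝ := r * (⨆ y : Metric.closedBall (0 : EuclideanSpace ℝ (Fin d)) r, ‖ξ ↑y‖)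
      + r ^ 2 * (⨆ y : Metric.closedBall (0 : EuclideanSpace ℝ (Fin d)) r, ‖fderiv ℝ ξ ↑y‖)
    ∃ C : ℝ, 0 < C ∧
      ∀ (z : EuclideanSpace ℝ (Fin d) × EuclideanSpace ℝ (Fin d)) (h : ℝ),
        ‖z.1‖ ^ 2 + ‖z.2‖ ^ 2 ≤ r ^ 2 → z.1 ∈ Mpert d U α (ε / 2) →
        0 < h → h < min (ε / r) (Real.sqrt (ε / (2 * Cr))) →
        ‖pbf d ξ (circleT d h (bounceT d ξ (circleT d h z))) - pbf d ξ z
            - h • (atilde d ξ z.1 z.2 + ((0 : EuclideanSpace ℝ (Fin d)), btilde d ξ z.1 z.2))‖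
          ≤ h ^ 2 * C :=
  stmt_13_general d U ξ hξ_C2 α r hr ε hε hεsub
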